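/- Let q be a real number with 0<q<1 and let w>0, w₁>0 be real. Then the Barnes-type Changhee q-zeta function s ↦ ζ_q(s,w|w₁) = -(1-q)^s/((s-1)·log q) + w₁·Σ_{k=0}^∞ q^{w₁k+w}·[w₁k+w]_q^{-s} is complex differentiable at every s∈ℂ with s≠1; in particular the series part s ↦ w₁·Σ_{k=0}^∞ q^{w₁k+w}·[w₁k+w]_q^{-s} is an entire function of s, so ζ_q(·,w|w₁) is analytic on ℂ with its only singularity a simple pole at s=1. -/

import Mathlib

open Complex

/-!
On a ball `‖s‖ < R` each term `a k * b k ^ (-s)` of a Dirichlet-type series whose bases `b k` stay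
in a compact subinterval of `(0, ∞)` is bounded by `‖a k‖ * exp (Λ R)`, with `Λ` a bound for
`|log b k|`. For the Changhee series the coefficients `q^(w₁k+w)` are geometric and the bases
`[w₁k+w]_q` lie in `[[w]_q, 1/(1-q)]`, so the Weierstrass M-test makes the series entire. The
remaining term of `ζ_q` is a quotient of entire functions whose denominator vanishes only at `s = 1`.
-/

/-- The `q`-number `[y]_q = (1 - q^y)/(1 - q)`, where `q^y` is the real power. -/
noncomputable def qNum (q y : ℝ) : ℝ := (1 - q ^ y) / (1 - q)

/-- The Barnes-type Changhee `q`-zeta function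
`ζ_q(s, w | w₁) = -(1-q)^s/((s-1)·log q) + w₁·Σ_{k≥0} q^{w₁k+w}·[w₁k+w]_q^{-s}`. -/
noncomputable def chZeta (q : ℝ) (s : ℂ) (w w₁ : ℝ) : ℂ :=
  -((1 - q : ℝ) : ℂ) ^ s / ((s - 1) * ((Real.log q : ℝ) : ℂ)) +
    (w₁ : ℂ) * ∑' k : ℕ, ((q ^ (w₁ * (k : ℝ) + w) : ℝ) : ℂ) *
      ((qNum q (w₁ * (k : ℝ) + w) : ℝ) : ℂ) ^ (-s)

lemma norm_ofReal_cpow_neg_le_exp {b Λ R : ℝ} (hb : 0 < b) (hΛ : |Real.log b| ≤ Λ) {z : ℂ}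
    (hz : ‖z‖ ≤ R) : ‖(b : ℂ) ^ (-z)‖ ≤ Real.exp (Λ * R) := by
  rw [norm_cpow_eq_rpow_re_of_pos hb, Real.rpow_def_of_pos hb, Real.exp_le_exp]
  calc Real.log b * (-z).re ≤ |Real.log b| * |z.re| := by
        rw [neg_re, mul_neg, ← abs_mul]; exact neg_le_abs _
    _ ≤ Λ * R := mul_le_mul hΛ ((abs_re_le_norm z).trans hz) (abs_nonneg _)
        ((abs_nonneg _).trans hΛ)

theorem differentiable_tsum_mul_ofReal_cpow_neg {ι : Type*} {a : ι → ℂ} {b : ι → ℝ} {m M : ℝ}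
    (ha : Summable fun i => ‖a i‖) (hm : 0 < m) (hbm : ∀ i, m ≤ b i) (hbM : ∀ i, b i ≤ M) :
    Differentiable ℂ fun s : ℂ => ∑' i, a i * (b i : ℂ) ^ (-s) := by
  have hb : ∀ i, 0 < b i := fun i => hm.trans_le (hbm i)
  have hΛ : ∀ i, |Real.log (b i)| ≤ max |Real.log m| |Real.log M| := fun i =>
    abs_le_max_abs_abs (Real.log_le_log hm (hbm i)) (Real.log_le_log (hb i) (hbM i))
  intro s₀
  set R := ‖s₀‖ + 1
  have hR : DifferentiableOn ℂ (fun s : ℂ => ∑' i, a i * (b i : ℂ) ^ (-s)) (Metric.ball 0 R) := by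
    refine differentiableOn_tsum_of_summable_norm
      (ha.mul_right (Real.exp (max |Real.log m| |Real.log M| * R)))
      (fun i => ?_) Metric.isOpen_ball fun i z hz => ?_
    · exact ((differentiable_neg.const_cpow
        (Or.inl (ofReal_ne_zero.mpr (hb i).ne'))).const_mul _).differentiableOn
    · rw [norm_mul]
      refine mul_le_mul_of_nonneg_left (norm_ofReal_cpow_neg_le_exp (hb i) (hΛ i) ?_)
        (norm_nonneg _)
      simpa using (mem_ball_zero_iff.mp hz).le
  exact hR.differentiableAt (Metric.isOpen_ball.mem_nhds (by simp [R]))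

lemma summable_rpow_mul_natCast_add {q : ℝ} (hq0 : 0 < q) (hq1 : q < 1) {w₁ : ℝ} (hw₁ : 0 < w₁)
    (w : ℝ) : Summable fun k : ℕ => q ^ (w₁ * k + w) := by
  have hgeom : ∀ k : ℕ, q ^ (w₁ * k + w) = q ^ w * (q ^ w₁) ^ k := fun k => by
    rw [Real.rpow_add hq0, Real.rpow_mul hq0.le, Real.rpow_natCast, mul_comm]
  simp_rw [hgeom]
  exact (summable_geometric_of_lt_one (by positivity) (Real.rpow_lt_one hq0.le hq1 hw₁)).mul_left _

lemma qNum_pos {q y : ℝ} (hq0 : 0 < q) (hq1 : q < 1) (hy : 0 < y) : 0 < qNum q y :=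
  div_pos (sub_pos.mpr (Real.rpow_lt_one hq0.le hq1 hy)) (sub_pos.mpr hq1)

lemma qNum_le_inv_one_sub {q : ℝ} (hq0 : 0 ≤ q) (hq1 : q < 1) (y : ℝ) :
    qNum q y ≤ (1 - q)⁻¹ := by
  rw [qNum, div_eq_mul_inv]
  exact mul_le_of_le_one_left (inv_nonneg.mpr (sub_pos.mpr hq1).le)
    (sub_le_self _ (Real.rpow_nonneg hq0 y))

lemma qNum_monotone {q : ℝ} (hq0 : 0 < q) (hq1 : q < 1) : Monotone (qNum q) := fun _ _ h =>
  div_le_div_of_nonneg_right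
    (sub_le_sub_left (Real.rpow_le_rpow_of_exponent_ge hq0 hq1.le h) 1) (sub_pos.mpr hq1).le

/-- The series part of the Barnes-type Changhee `q`-zeta function is an entire function of `s`,
and `ζ_q(·, w | w₁)` is analytic on `ℂ ∖ {1}` (its only singularity is a simple pole at `s=1`). -/
theorem stmt15 (q : ℝ) (hq0 : 0 < q) (hq1 : q < 1) (w w₁ : ℝ) (hw : 0 < w) (hw₁ : 0 < w₁) :
    Differentiable ℂ (fun s : ℂ => (w₁ : ℂ) * ∑' k : ℕ,
      ((q ^ (w₁ * (k : ℝ) + w) : ℝ) : ℂ) * ((qNum q (w₁ * (k : ℝ) + w) : ℝ) : ℂ) ^ (-s)) ∧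
    ∀ s : ℂ, s ≠ 1 → DifferentiableAt ℂ (fun s : ℂ => chZeta q s w w₁) s := by
  have hcoeff : Summable fun k : ℕ => ‖((q ^ (w₁ * (k : ℝ) + w) : ℝ) : ℂ)‖ := by
    simpa [norm_real, abs_of_pos (Real.rpow_pos_of_pos hq0 _)]
      using summable_rpow_mul_natCast_add hq0 hq1 hw₁ w
  have hseries := (differentiable_tsum_mul_ofReal_cpow_neg
    (b := fun k : ℕ => qNum q (w₁ * k + w)) hcoeff (qNum_pos hq0 hq1 hw)
    (fun k => qNum_monotone hq0 hq1 (le_add_of_nonneg_left (by positivity)))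
    (fun _ => qNum_le_inv_one_sub hq0.le hq1 _)).const_mul (w₁ : ℂ)
  refine ⟨hseries, fun s hs => ?_⟩
  have hlog : ((Real.log q : ℝ) : ℂ) ≠ 0 := ofReal_ne_zero.mpr (Real.log_neg hq0 hq1).ne
  have hpole : DifferentiableAt ℂ
      (fun s : ℂ => -((1 - q : ℝ) : ℂ) ^ s / ((s - 1) * ((Real.log q : ℝ) : ℂ))) s :=
    ((differentiableAt_id.const_cpow (Or.inl (ofReal_ne_zero.mpr (sub_pos.mpr hq1).ne'))).neg).div
      ((differentiableAt_id.sub_const 1).mul_const _) (mul_ne_zero (sub_ne_zero.mpr hs) hlog)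
  exact hpole.add (hseries s)
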